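/- arXiv:math/0405542 — 2 statements merged into one kernel-verified Lean document; each statement's English description precedes it below -/
import Mathlib

section
/- If $w = \sum_{l\ge 1} w_l t^{q^l}$ is an $\mathbb{F}_q$-linear power series with zero constant-level coefficient and $|w_l| \le C_1^{q^l - 1}$ for all $l \ge 1$ with $C_1 \ge 1$, then $t + w$ is invertible in $\mathcal{R}_K$, and its composition inverse $\sum_{n\ge 0}(-1)^n w^{\circ n}$ has coefficients $a_j$ satisfying $|a_j| \le C_1^{q^j - 1}$. -/
open scoped Classical

/- STATEMENT 5: if w has zero constant-level coefficient and |w_l| ≤ C₁^{q^l-1}, then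
t + w is invertible in 𝓡_K, its inverse is ∑ (-1)^n w^{∘n}, whose coefficients satisfy
the same bound C₁^{q^j-1}. -/

/-- The field K = 𝔽_q((x)) of formal Laurent series over 𝔽_q, q = p^v. -/
abbrev Kf (p v : ℕ) [Fact p.Prime] := LaurentSeries (GaloisField p v)

/-- The absolute value |t| = q^{-N} on K, where N is the order of vanishing. -/
noncomputable def labs (p v : ℕ) [Fact p.Prime] (f : Kf p v) : ℝ :=
  if f = 0 then 0 else ((p : ℝ) ^ v) ^ (-f.order)

/-- Coefficients of the composition: `(a ∘ b)_l = ∑_{n=0}^l a_n b_{l-n}^{q^n}`. -/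
def compC {F : Type*} [Field F] (q : ℕ) (a b : ℕ → F) : ℕ → F :=
  fun l => ∑ n ∈ Finset.range (l + 1), a n * b (l - n) ^ q ^ n

/-- `compPow q a n` is the `n`-fold composition power `a^{∘n}` (with `a^{∘0} = t`). -/
def compPow {F : Type*} [Field F] (q : ℕ) (a : ℕ → F) : ℕ → ℕ → F
  | 0 => fun k => if k = 0 then 1 else 0
  | n + 1 => compC q a (compPow q a n)

/-! ### Auxiliary lemmas about `labs` -/

section labs
variable (p v : ℕ) [Fact p.Prime]

lemma base_pos : (0:ℝ) < (p:ℝ) ^ v := by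
  have := (Fact.out : p.Prime).pos
  positivity

lemma base_one_le : (1:ℝ) ≤ (p:ℝ) ^ v := by
  have := (Fact.out : p.Prime).two_le
  exact one_le_pow₀ (by exact_mod_cast Nat.one_le_of_lt this)

lemma labs_nonneg (f : Kf p v) : 0 ≤ labs p v f := by
  unfold labs; split
  · exact le_refl 0
  · exact zpow_nonneg (base_pos p v).le _

lemma labs_zero : labs p v 0 = 0 := by simp [labs]

lemma labs_one : labs p v 1 = 1 := by
  simp [labs, HahnSeries.order_one]

lemma labs_mul (a b : Kf p v) : labs p v (a * b) = labs p v a * labs p v b := by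
  by_cases ha : a = 0
  · simp [ha, labs_zero]
  by_cases hb : b = 0
  · simp [hb, labs_zero]
  have hab : a * b ≠ 0 := mul_ne_zero ha hb
  simp only [labs, if_neg ha, if_neg hb, if_neg hab]
  rw [HahnSeries.order_mul ha hb, neg_add, zpow_add₀ (ne_of_gt (base_pos p v))]

lemma labs_pow (a : Kf p v) (n : ℕ) : labs p v (a ^ n) = labs p v a ^ n := by
  induction n with
  | zero => simp [labs_one]
  | succ n ih => rw [pow_succ, labs_mul, ih, pow_succ]

lemma labs_neg_one_pow_mul (n : ℕ) (a : Kf p v) :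
    labs p v ((-1) ^ n * a) = labs p v a := by
  rw [labs_mul, labs_pow]
  have : labs p v (-1 : Kf p v) = 1 := by
    simp [labs, HahnSeries.order_neg, HahnSeries.order_one]
  rw [this, one_pow, one_mul]

lemma labs_add_le (a b : Kf p v) :
    labs p v (a + b) ≤ max (labs p v a) (labs p v b) := by
  by_cases hab : a + b = 0
  · simp only [labs, if_pos hab]
    exact le_max_of_le_left (labs_nonneg p v a)
  by_cases ha : a = 0
  · simp [ha]
  by_cases hb : b = 0
  · simp [hb]
  have hmin := HahnSeries.min_order_le_order_add hab
  simp only [labs, if_neg ha, if_neg hb, if_neg hab]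
  rcases le_total a.order b.order with h | h
  · refine le_max_of_le_left (zpow_le_zpow_right₀ (base_one_le p v) ?_)
    simp only [min_eq_left h] at hmin; omega
  · refine le_max_of_le_right (zpow_le_zpow_right₀ (base_one_le p v) ?_)
    simp only [min_eq_right h] at hmin; omega

lemma labs_sum_le {ι : Type*} (s : Finset ι) (f : ι → Kf p v) (B : ℝ)
    (hB : 0 ≤ B) (h : ∀ i ∈ s, labs p v (f i) ≤ B) :
    labs p v (∑ i ∈ s, f i) ≤ B := by
  classical
  induction s using Finset.induction with
  | empty => simpa [labs_zero] using hB
  | @insert a s hx ih =>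
    rw [Finset.sum_insert hx]
    exact (labs_add_le p v _ _).trans
      (max_le (h a (by simp)) (ih fun i hi => h i (by simp [hi])))

end labs

/-! ### Auxiliary lemmas about composition -/

section comp
variable {F : Type*} [Field F] (p : ℕ) [Fact p.Prime] [CharP F p] (e : ℕ)

/-- The `q^n`-power Frobenius as a ring hom, where `q = p ^ e`. -/
noncomputable def qhom (n : ℕ) : F →+* F :=
  haveI : ExpChar F p := ExpChar.prime Fact.out
  iterateFrobenius F p (e * n)

lemma qhom_apply (n : ℕ) (x : F) : qhom p e n x = x ^ (p ^ e) ^ n := by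
  haveI : ExpChar F p := ExpChar.prime Fact.out
  rw [qhom, iterateFrobenius_def, ← pow_mul]

variable {p e}

lemma compPow_eq_zero (q : ℕ) (hq : 0 < q) (w : ℕ → F) (hw0 : w 0 = 0) :
    ∀ n j, j < n → compPow q w n j = 0 := by
  intro n
  induction n with
  | zero => omega
  | succ n ih =>
    intro j hj
    show compC q w (compPow q w n) j = 0
    unfold compC
    refine Finset.sum_eq_zero fun m hm => ?_
    simp only [Finset.mem_range] at hm
    rcases Nat.eq_zero_or_pos m with h0 | h0
    · simp [h0, hw0]
    · rw [ih (j - m) (by omega), zero_pow (by positivity), mul_zero]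

lemma compC_assoc (a b c : ℕ → F) (l : ℕ) :
    compC (p ^ e) a (compC (p ^ e) b c) l = compC (p ^ e) (compC (p ^ e) a b) c l := by
  unfold compC
  have lhs : ∀ i, (∑ j ∈ Finset.range (l - i + 1), b j * c (l - i - j) ^ (p ^ e) ^ j) ^ (p ^ e) ^ i
      = ∑ j ∈ Finset.range (l - i + 1), b j ^ (p ^ e) ^ i * c (l - i - j) ^ (p ^ e) ^ (i + j) := by
    intro i
    rw [← qhom_apply p e i, map_sum]
    refine Finset.sum_congr rfl fun j _ => ?_
    rw [map_mul, map_pow, qhom_apply, qhom_apply,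
      ← pow_mul (c (l - i - j)) ((p ^ e) ^ i) ((p ^ e) ^ j), ← pow_add (p ^ e) i j]
  simp_rw [lhs, Finset.mul_sum, Finset.sum_mul]
  rw [Finset.sum_sigma', Finset.sum_sigma']
  refine Finset.sum_nbij' (fun x => ⟨x.1 + x.2, x.1⟩) (fun x => ⟨x.2, x.1 - x.2⟩) ?_ ?_ ?_ ?_ ?_
  · intro x hx
    simp only [Finset.mem_sigma, Finset.mem_range] at *
    omega
  · intro x hx
    simp only [Finset.mem_sigma, Finset.mem_range] at *
    omega
  · intro x hx
    simp only [Finset.mem_sigma, Finset.mem_range] at hx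
    simp
  · intro x hx
    simp only [Finset.mem_sigma, Finset.mem_range] at hx
    simp [Nat.add_sub_cancel' (by omega : x.2 ≤ x.1)]
  · intro x hx
    simp only [Finset.mem_sigma, Finset.mem_range] at hx
    simp only [Nat.add_sub_cancel_left, Nat.sub_sub]
    ring

lemma compC_compPow (w : ℕ → F) (n : ℕ) (l : ℕ) :
    compC (p ^ e) (compPow (p ^ e) w n) w l = compPow (p ^ e) w (n + 1) l := by
  induction n generalizing l with
  | zero =>
    have hq : (p : ℕ) ^ e ≠ 0 := pow_ne_zero _ (Fact.out : p.Prime).ne_zero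
    have h1 : compC (p ^ e) (compPow (p ^ e) w 0) w l = w l := by
      unfold compC compPow
      rw [Finset.sum_eq_single 0 (fun m hm h0 => by simp [h0]) (by simp)]
      simp
    have h2 : compPow (p ^ e) w (0 + 1) l = w l := by
      show compC (p ^ e) w (compPow (p ^ e) w 0) l = w l
      unfold compC compPow
      rw [Finset.sum_eq_single l (fun m hm h0 => by
        simp only [Finset.mem_range] at hm
        have h3 : ¬ (l - m = 0) := by omega
        have h4 : (p ^ e) ^ m ≠ 0 := pow_ne_zero _ hq
        simp [h3, zero_pow h4]) (by simp)]
      simp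
    rw [h1, h2]
  | succ n ih =>
    show compC (p ^ e) (compC (p ^ e) w (compPow (p ^ e) w n)) w l = _
    rw [← compC_assoc]
    have hb : compC (p ^ e) (compPow (p ^ e) w n) w = compPow (p ^ e) w (n + 1) :=
      funext ih
    rw [hb]
    rfl

end comp

instance kfCharP (p v : ℕ) [Fact p.Prime] : CharP (Kf p v) p :=
  charP_of_injective_ringHom (f := HahnSeries.C) HahnSeries.C_injective p

/-! ### Main lemma -/

set_option maxHeartbeats 2000000 in
lemma mainLemma (p v : ℕ) [Fact p.Prime] (hv : 0 < v)
    (w : ℕ → Kf p v) (hw0 : w 0 = 0) (C₁ : ℝ) (hC₁ : 1 ≤ C₁)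
    (hw : ∀ l, labs p v (w l) ≤ C₁ ^ ((p ^ v) ^ l - 1)) :
    (∀ l, compC (p ^ v) (fun k => (if k = 0 then 1 else 0) + w k)
        (fun j => ∑ n ∈ Finset.range (j + 1), (-1 : Kf p v) ^ n * compPow (p ^ v) w n j) l
        = if l = 0 then 1 else 0) ∧
    (∀ l, compC (p ^ v) (fun j => ∑ n ∈ Finset.range (j + 1),
          (-1 : Kf p v) ^ n * compPow (p ^ v) w n j)
        (fun k => (if k = 0 then 1 else 0) + w k) l = if l = 0 then 1 else 0) ∧
    (∀ j, labs p v (∑ n ∈ Finset.range (j + 1), (-1 : Kf p v) ^ n * compPow (p ^ v) w n j)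
        ≤ C₁ ^ ((p ^ v) ^ j - 1)) := by
  have hp : p.Prime := Fact.out
  have hq0 : 0 < p ^ v := pow_pos hp.pos v
  have hqn : ∀ n : ℕ, ((p : ℕ) ^ v) ^ n ≠ 0 := fun n => pow_ne_zero _ (by omega)
  have hS0 := compPow_eq_zero (p ^ v) hq0 w hw0
  -- telescoping identity
  have tele : ∀ l, (∑ n ∈ Finset.range (l + 1), (-1 : Kf p v) ^ n * compPow (p ^ v) w n l)
      + (∑ m ∈ Finset.range (l + 1), (-1 : Kf p v) ^ m * compPow (p ^ v) w (m + 1) l)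
      = if l = 0 then 1 else 0 := by
    intro l
    rw [Finset.sum_range_succ' (fun n => (-1 : Kf p v) ^ n * compPow (p ^ v) w n l) l,
      Finset.sum_range_succ, hS0 (l + 1) l (lt_add_one l), mul_zero, add_zero,
      add_comm (∑ i ∈ Finset.range l, (-1 : Kf p v) ^ (i + 1) * compPow (p ^ v) w (i + 1) l),
      add_assoc, ← Finset.sum_add_distrib]
    have hz : ∀ i, (-1 : Kf p v) ^ (i + 1) * compPow (p ^ v) w (i + 1) l
        + (-1 : Kf p v) ^ i * compPow (p ^ v) w (i + 1) l = 0 := by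
      intro i; rw [pow_succ]; ring
    simp only [hz, Finset.sum_const_zero, add_zero, pow_zero, one_mul]
    rfl
  -- the "expand, extend and swap" identity for `tw ∘ inv`
  have hswap1 : ∀ l, (∑ n ∈ Finset.range (l + 1), w n *
        (∑ m ∈ Finset.range (l - n + 1), (-1 : Kf p v) ^ m * compPow (p ^ v) w m (l - n))
          ^ (p ^ v) ^ n)
      = ∑ m ∈ Finset.range (l + 1), (-1 : Kf p v) ^ m * compPow (p ^ v) w (m + 1) l := by
    intro l
    have step : ∀ n ∈ Finset.range (l + 1),
        w n * (∑ m ∈ Finset.range (l - n + 1),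
            (-1 : Kf p v) ^ m * compPow (p ^ v) w m (l - n)) ^ (p ^ v) ^ n
        = ∑ m ∈ Finset.range (l + 1),
            (-1 : Kf p v) ^ m * (w n * compPow (p ^ v) w m (l - n) ^ (p ^ v) ^ n) := by
      intro n hn
      simp only [Finset.mem_range] at hn
      rw [← qhom_apply p v n, map_sum]
      have hterm : ∀ m, qhom p v n ((-1 : Kf p v) ^ m * compPow (p ^ v) w m (l - n))
          = (-1 : Kf p v) ^ m * compPow (p ^ v) w m (l - n) ^ (p ^ v) ^ n := by
        intro m
        rw [map_mul, map_pow, map_neg, map_one, qhom_apply]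
      simp only [hterm]
      rw [Finset.sum_subset (Finset.range_subset_range.mpr (by omega : l - n + 1 ≤ l + 1))
        (fun m hm hnm => by
          simp only [Finset.mem_range] at hm hnm
          rw [hS0 m (l - n) (by omega), zero_pow (hqn n), mul_zero]),
        Finset.mul_sum]
      exact Finset.sum_congr rfl fun m _ => by ring
    rw [Finset.sum_congr rfl step, Finset.sum_comm]
    refine Finset.sum_congr rfl fun m _ => ?_
    rw [← Finset.mul_sum]
    rfl
  -- the "expand, extend and swap" identity for `inv ∘ tw`
  have hswap2 : ∀ l, (∑ n ∈ Finset.range (l + 1),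
        (∑ m ∈ Finset.range (n + 1), (-1 : Kf p v) ^ m * compPow (p ^ v) w m n)
          * w (l - n) ^ (p ^ v) ^ n)
      = ∑ m ∈ Finset.range (l + 1), (-1 : Kf p v) ^ m * compPow (p ^ v) w (m + 1) l := by
    intro l
    have step : ∀ n ∈ Finset.range (l + 1),
        (∑ m ∈ Finset.range (n + 1), (-1 : Kf p v) ^ m * compPow (p ^ v) w m n)
            * w (l - n) ^ (p ^ v) ^ n
        = ∑ m ∈ Finset.range (l + 1),
            (-1 : Kf p v) ^ m * (compPow (p ^ v) w m n * w (l - n) ^ (p ^ v) ^ n) := by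
      intro n hn
      simp only [Finset.mem_range] at hn
      rw [Finset.sum_mul,
        Finset.sum_subset (Finset.range_subset_range.mpr (by omega : n + 1 ≤ l + 1))
          (fun m hm hnm => by
            simp only [Finset.mem_range] at hm hnm
            rw [hS0 m n (by omega), mul_zero, zero_mul])]
      exact Finset.sum_congr rfl fun m _ => by ring
    rw [Finset.sum_congr rfl step, Finset.sum_comm]
    refine Finset.sum_congr rfl fun m _ => ?_
    rw [← Finset.mul_sum]
    congr 1
    exact compC_compPow w m l
  refine ⟨?_, ?_, ?_⟩
  · -- tw ∘ inv = identity
    intro l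
    show ∑ n ∈ Finset.range (l + 1), ((if n = 0 then (1 : Kf p v) else 0) + w n)
        * (∑ m ∈ Finset.range (l - n + 1), (-1 : Kf p v) ^ m * compPow (p ^ v) w m (l - n))
          ^ (p ^ v) ^ n = if l = 0 then 1 else 0
    simp_rw [add_mul]
    rw [Finset.sum_add_distrib]
    have h1 : ∑ n ∈ Finset.range (l + 1), (if n = 0 then (1 : Kf p v) else 0)
        * (∑ m ∈ Finset.range (l - n + 1), (-1 : Kf p v) ^ m * compPow (p ^ v) w m (l - n))
          ^ (p ^ v) ^ n
        = ∑ m ∈ Finset.range (l + 1), (-1 : Kf p v) ^ m * compPow (p ^ v) w m l := by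
      rw [Finset.sum_eq_single 0 (fun m _ h0 => by simp [h0]) (by simp)]
      simp
    rw [h1, hswap1 l]
    exact tele l
  · -- inv ∘ tw = identity
    intro l
    show ∑ n ∈ Finset.range (l + 1),
        (∑ m ∈ Finset.range (n + 1), (-1 : Kf p v) ^ m * compPow (p ^ v) w m n)
          * ((if l - n = 0 then (1 : Kf p v) else 0) + w (l - n)) ^ (p ^ v) ^ n
        = if l = 0 then 1 else 0
    have expand : ∀ n, ((if l - n = 0 then (1 : Kf p v) else 0) + w (l - n)) ^ (p ^ v) ^ n
        = (if l - n = 0 then (1 : Kf p v) else 0) + w (l - n) ^ (p ^ v) ^ n := by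
      intro n
      rw [← qhom_apply p v n, map_add, apply_ite (qhom p v n), map_one, map_zero, qhom_apply]
    simp_rw [expand, mul_add]
    rw [Finset.sum_add_distrib]
    have h1 : ∑ n ∈ Finset.range (l + 1),
        (∑ m ∈ Finset.range (n + 1), (-1 : Kf p v) ^ m * compPow (p ^ v) w m n)
          * (if l - n = 0 then (1 : Kf p v) else 0)
        = ∑ m ∈ Finset.range (l + 1), (-1 : Kf p v) ^ m * compPow (p ^ v) w m l := by
      rw [Finset.sum_eq_single l (fun m hm h0 => by
        simp only [Finset.mem_range] at hm
        have : ¬ (l - m = 0) := by omega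
        simp [this]) (by simp)]
      simp
    rw [h1, hswap2 l]
    exact tele l
  · -- the coefficient bound
    have key : ∀ n j, labs p v (compPow (p ^ v) w n j) ≤ C₁ ^ ((p ^ v) ^ j - 1) := by
      intro n
      induction n with
      | zero =>
        intro j
        show labs p v (if j = 0 then 1 else 0) ≤ _
        split
        · rw [labs_one]; exact one_le_pow₀ hC₁
        · rw [labs_zero]; positivity
      | succ n ih =>
        intro j
        show labs p v (∑ m ∈ Finset.range (j + 1),
            w m * compPow (p ^ v) w n (j - m) ^ (p ^ v) ^ m) ≤ _
        refine labs_sum_le p v _ _ _ (by positivity) fun m hm => ?_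
        simp only [Finset.mem_range] at hm
        rw [labs_mul, labs_pow]
        calc labs p v (w m) * labs p v (compPow (p ^ v) w n (j - m)) ^ (p ^ v) ^ m
            ≤ C₁ ^ ((p ^ v) ^ m - 1) * (C₁ ^ ((p ^ v) ^ (j - m) - 1)) ^ (p ^ v) ^ m := by
              refine mul_le_mul (hw m)
                (pow_le_pow_left₀ (labs_nonneg p v _) (ih (j - m)) _)
                (pow_nonneg (labs_nonneg p v _) _) (by positivity)
          _ = C₁ ^ ((p ^ v) ^ j - 1) := by
              rw [← pow_mul C₁ (((p : ℕ) ^ v) ^ (j - m) - 1) (((p : ℕ) ^ v) ^ m),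
                ← pow_add C₁ (((p : ℕ) ^ v) ^ m - 1)
                  ((((p : ℕ) ^ v) ^ (j - m) - 1) * ((p : ℕ) ^ v) ^ m)]
              congr 1
              have h1 : ((p : ℕ) ^ v) ^ m * ((p : ℕ) ^ v) ^ (j - m) = ((p : ℕ) ^ v) ^ j := by
                rw [← pow_add]; congr 1; omega
              have h2 : 1 ≤ ((p : ℕ) ^ v) ^ m := Nat.one_le_pow _ _ hq0
              have h4 : ((p : ℕ) ^ v) ^ m ≤ ((p : ℕ) ^ v) ^ j :=
                Nat.pow_le_pow_right hq0 (by omega)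
              rw [Nat.sub_mul, one_mul]
              have h5 : ((p : ℕ) ^ v) ^ (j - m) * ((p : ℕ) ^ v) ^ m = ((p : ℕ) ^ v) ^ j := by
                rw [mul_comm]; exact h1
              omega
    intro j
    refine labs_sum_le p v _ _ _ (by positivity) fun n _ => ?_
    rw [labs_neg_one_pow_mul]
    exact key n j

set_option maxHeartbeats 2000000 in
theorem t_plus_w_invertible (p v : ℕ) [Fact p.Prime] (hv : 0 < v)
    (w : ℕ → Kf p v) (hw0 : w 0 = 0) (C₁ : ℝ) (hC₁ : 1 ≤ C₁)
    (hw : ∀ l, labs p v (w l) ≤ C₁ ^ ((p ^ v) ^ l - 1)) :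
    -- the coefficients of ∑_{n≥0} (-1)^n w^{∘n}  (a finite sum at each level, since
    -- w^{∘n} starts at level n)
    let q := p ^ v
    let tw : ℕ → Kf p v := fun k => (if k = 0 then 1 else 0) + w k   -- t + w
    let inv : ℕ → Kf p v := fun j => ∑ n ∈ Finset.range (j + 1), (-1 : Kf p v) ^ n * compPow q w n j
    (∀ l, compC q tw inv l = if l = 0 then 1 else 0) ∧
    (∀ l, compC q inv tw l = if l = 0 then 1 else 0) ∧
    (∀ j, labs p v (inv j) ≤ C₁ ^ (q ^ j - 1)) := by
  intro q tw inv
  exact mainLemma p v hv w hw0 C₁ hC₁ hw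
end

section
/- Suppose a sequence $(d_n)_{n\ge 1}$ in a non-Archimedean valued field satisfies $d_{i+1} = \mu_i \sum_{j+l=i,\,l\ne 0}\sum_{k\ge 1} b_{jkl}\sum_{n_1+\cdots+n_k=l}(d_{n_1} d_{n_2}^{q^{n_1}}\cdots d_{n_k}^{q^{n_1+\cdots+n_{k-1}}})^{q^{j+1}} + e_i$ with $|b_{jkl}| \le 1$, $|\mu_i| \le M$, and set $B = \max\{1, M, |d_1|, M^{-1}\sup_i |e_i|\}$ (assumed finite). Then $|d_n| \le B^{q^{n-1}+q^{n-2}+\cdots+q+1}$ for all $n \ge 1$. -/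
-- auxiliary lemmas

lemma na_sum {F : Type*} [Field F] (abv : AbsoluteValue F ℝ)
    (hna : IsNonarchimedean (fun t => abv t)) {ι : Type*} (s : Finset ι) (f : ι → F)
    (C : ℝ) (hC : 0 ≤ C) (h : ∀ i ∈ s, abv (f i) ≤ C) : abv (∑ i ∈ s, f i) ≤ C := by
  induction s using Finset.cons_induction with
  | empty => simpa using hC
  | cons a s ha ih =>
    rw [Finset.sum_cons]
    refine le_trans (hna _ _) (max_le (h a (Finset.mem_cons_self a s)) ?_)
    exact ih fun i hi => h i (Finset.mem_cons_of_mem hi)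

lemma geom_split (q m l : ℕ) (hml : m ≤ l) :
    (∑ r ∈ Finset.range m, q ^ r) + q ^ m * (∑ r ∈ Finset.range (l - m), q ^ r)
      = ∑ r ∈ Finset.range l, q ^ r := by
  rw [Finset.mul_sum]
  have : q ^ m * (∑ r ∈ Finset.range (l - m), q ^ r) = ∑ r ∈ Finset.Ico m l, q ^ r := by
    rw [Finset.sum_Ico_eq_sum_range, Finset.mul_sum]
    exact Finset.sum_congr rfl fun r _ => by rw [pow_add]
  rw [← Finset.mul_sum, this, Finset.sum_range_add_sum_Ico _ hml]

lemma compPow_bound {F : Type*} [Field F] (abv : AbsoluteValue F ℝ)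
    (hna : IsNonarchimedean (fun t => abv t)) (q : ℕ) (a : ℕ → F) (B : ℝ) (hB : 1 ≤ B)
    (L : ℕ) (ha : ∀ m ≤ L, abv (a m) ≤ B ^ (∑ r ∈ Finset.range m, q ^ r)) :
    ∀ k, ∀ l ≤ L, abv (compPow q a k l) ≤ B ^ (∑ r ∈ Finset.range l, q ^ r) := by
  have hB0 : (0:ℝ) < B := lt_of_lt_of_le one_pos hB
  have hpos : ∀ n : ℕ, (0:ℝ) < B ^ n := fun n => pow_pos hB0 n
  intro k
  induction k with
  | zero =>
    intro l _
    by_cases hl : l = 0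
    · simp [compPow, hl]
    · simp [compPow, hl]
      exact le_of_lt (hpos _)
  | succ k ih =>
    intro l hl
    show abv (compC q a (compPow q a k) l) ≤ _
    unfold compC
    refine na_sum abv hna _ _ _ (le_of_lt (hpos _)) ?_
    intro m hm
    rw [Finset.mem_range, Nat.lt_succ_iff] at hm
    rw [map_mul, map_pow]
    calc abv (a m) * abv (compPow q a k (l - m)) ^ q ^ m
        ≤ B ^ (∑ r ∈ Finset.range m, q ^ r) *
            (B ^ (∑ r ∈ Finset.range (l - m), q ^ r)) ^ q ^ m := by
          apply mul_le_mul (ha m (hm.trans hl)) _ (pow_nonneg (abv.nonneg _) _)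
            (le_of_lt (hpos _))
          exact pow_le_pow_left₀ (abv.nonneg _) (ih (l - m) ((Nat.sub_le l m).trans hl)) _
      _ = B ^ (∑ r ∈ Finset.range l, q ^ r) := by
          rw [← pow_mul, ← pow_add, mul_comm, geom_split q m l hm]

theorem reduced_recurrence_bound
    {F : Type*} [Field F] (p v q : ℕ) [Fact p.Prime] (hv : 0 < v) [CharP F p]
    (hq : q = p ^ v)
    (abv : AbsoluteValue F ℝ) (hna : IsNonarchimedean (fun t => abv t))
    (d μ e : ℕ → F) (b : ℕ → ℕ → ℕ → F) (M S : ℝ) (hM : 0 < M)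
    (hμ : ∀ i, abv (μ i) ≤ M) (hb : ∀ j k l, abv (b j k l) ≤ 1)
    (hS : ∀ i, abv (e i) ≤ S)   -- S = sup_i |e_i|, assumed finite
    (hrec : ∀ i, 1 ≤ i → d (i + 1) =
      μ i * (∑ l ∈ Finset.Icc 1 i, ∑ k ∈ Finset.Icc 1 l,
        b (i - l) k l *
          (compPow q (fun n => if n = 0 then 0 else d n) k l) ^ q ^ (i - l + 1)) + e i) :
    ∀ n, 1 ≤ n →
      abv (d n) ≤ (max (max 1 M) (max (abv (d 1)) (S / M))) ^ (∑ r ∈ Finset.range n, q ^ r) := by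
  set B := max (max 1 M) (max (abv (d 1)) (S / M)) with hBdef
  have hB1 : (1:ℝ) ≤ B := le_trans (le_max_left 1 M) (le_max_left _ _)
  have hBM : M ≤ B := le_trans (le_max_right 1 M) (le_max_left _ _)
  have hBd : abv (d 1) ≤ B := le_trans (le_max_left _ _) (le_max_right _ _)
  have hB0 : (0:ℝ) < B := lt_of_lt_of_le one_pos hB1
  have hBS : S ≤ M * B := by
    have h1 : S / M ≤ B := le_trans (le_max_right _ _) (le_max_right _ _)
    calc S = M * (S / M) := by field_simp
      _ ≤ M * B := mul_le_mul_of_nonneg_left h1 hM.le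
  have hq1 : 1 ≤ q := by
    subst hq; exact Nat.one_le_pow _ _ (Fact.out : p.Prime).pos
  intro n
  induction n using Nat.strong_induction_on with
  | _ n IH =>
    intro hn
    rcases Nat.lt_or_ge n 2 with h2 | h2
    · interval_cases n
      simpa using hBd
    · obtain ⟨i, rfl⟩ : ∃ i, n = i + 1 + 1 := ⟨n - 2, by omega⟩
      rw [hrec (i + 1) (by omega)]
      set E := ∑ r ∈ Finset.Ico 1 (i + 2), q ^ r with hE
      have hsplit : 1 + E = ∑ r ∈ Finset.range (i + 2), q ^ r := by
        have := Finset.sum_range_add_sum_Ico (fun r => q ^ r) (show 1 ≤ i + 2 by omega)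
        simpa using this
      have hg2 : 2 ≤ ∑ r ∈ Finset.range (i + 2), q ^ r := by
        calc 2 = i + 2 - i := by omega
          _ ≤ ∑ r ∈ Finset.range (i + 2), 1 := by simp
          _ ≤ ∑ r ∈ Finset.range (i + 2), q ^ r :=
            Finset.sum_le_sum fun r _ => Nat.one_le_pow _ _ (by omega)
      refine le_trans (hna _ _) (max_le ?_ ?_)
      · -- the μ * T term
        beta_reduce
        rw [map_mul]
        have hT : abv (∑ l ∈ Finset.Icc 1 (i + 1), ∑ k ∈ Finset.Icc 1 l,
            b (i + 1 - l) k l *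
              (compPow q (fun n => if n = 0 then 0 else d n) k l) ^ q ^ (i + 1 - l + 1))
            ≤ B ^ E := by
          refine na_sum abv hna _ _ _ (pow_pos hB0 _).le ?_
          intro l hl
          rw [Finset.mem_Icc] at hl
          refine na_sum abv hna _ _ _ (pow_pos hB0 _).le ?_
          intro k _
          rw [map_mul, map_pow]
          have hP : abv (compPow q (fun n => if n = 0 then 0 else d n) k l)
              ≤ B ^ (∑ r ∈ Finset.range l, q ^ r) := by
            refine compPow_bound abv hna q _ B hB1 l ?_ k l le_rfl
            intro m hm
            by_cases hm0 : m = 0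
            · simp [hm0]
            · simp only [if_neg hm0]
              exact IH m (by omega) (by omega)
          calc abv (b (i + 1 - l) k l) *
                abv (compPow q (fun n => if n = 0 then 0 else d n) k l) ^ q ^ (i + 1 - l + 1)
              ≤ 1 * (B ^ (∑ r ∈ Finset.range l, q ^ r)) ^ q ^ (i + 1 - l + 1) := by
                apply mul_le_mul (hb _ _ _) (pow_le_pow_left₀ (abv.nonneg _) hP _)
                  (pow_nonneg (abv.nonneg _) _) zero_le_one
            _ = B ^ ((∑ r ∈ Finset.range l, q ^ r) * q ^ (i + 1 - l + 1)) := by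
                rw [one_mul, pow_mul]
            _ ≤ B ^ E := by
                apply pow_le_pow_right₀ hB1
                have hexp : (∑ r ∈ Finset.range l, q ^ r) * q ^ (i + 1 - l + 1)
                    = ∑ r ∈ Finset.Ico (i + 1 - l + 1) (i + 2), q ^ r := by
                  rw [Finset.sum_Ico_eq_sum_range]
                  have h1 : i + 2 - (i + 1 - l + 1) = l := by omega
                  rw [h1, Finset.sum_mul]
                  exact Finset.sum_congr rfl fun r _ => by
                    rw [← pow_add, Nat.add_comm]
                rw [hexp, hE]
                exact Finset.sum_le_sum_of_subset
                  (Finset.Ico_subset_Ico (by omega) le_rfl)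
        calc abv (μ (i + 1)) * abv _ ≤ B * B ^ E :=
              mul_le_mul (hμ _ |>.trans hBM) hT (abv.nonneg _) hB0.le
          _ = B ^ (1 + E) := by rw [pow_add, pow_one]
          _ = B ^ (∑ r ∈ Finset.range (i + 2), q ^ r) := by rw [hsplit]
      · -- the e term
        beta_reduce
        calc abv (e (i + 1)) ≤ S := hS _
          _ ≤ M * B := hBS
          _ ≤ B * B := mul_le_mul_of_nonneg_right hBM hB0.le
          _ = B ^ 2 := (sq B).symm
          _ ≤ B ^ (∑ r ∈ Finset.range (i + 2), q ^ r) := pow_le_pow_right₀ hB1 hg2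
end
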